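/- arXiv:2104.03461 — 2 statements merged into one kernel-verified Lean document; each statement's English description precedes it below -/
import Mathlib

section
/- Let N be a positive integer divisible by 4 and let f : [-1,1] → ℝ be a continuous function with f(x) ≥ 0 for all x ∈ [-1,1]. Then the Jackson damped Chebyshev approximation f̄_N(x) = Σ_{k=0}^{N} (b̂_N[k]/b̂_N[0]) · ⟨f, w·T̄_k⟩ · T̄_k(x) satisfies f̄_N(x) ≥ 0 for all x ∈ [-1,1]. -/
/-!
Put `x = cos θ`, `y = cos φ`. Then `f̄_N(x) = ∫ f(y) w(y) K(x, y) dy` with the kernel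
`K(x, y) = Σ_k (b̂_N[k] / b̂_N[0]) T̄_k(x) T̄_k(y)`, which equals
`(b̂_N[0] + 2 Σ_{k ≥ 1} b̂_N[k] cos kθ cos kφ) / (π b̂_N[0])`, and
`2 cos kθ cos kφ = cos k(θ - φ) + cos k(θ + φ)`. For `N = 2m`, `b̂_N` is the autocorrelation of the
tent `c_j = m + 1 - |j|` on `[-m, m]`, so `b̂_N[0] + 2 Σ_{k ≥ 1} b̂_N[k] cos kα = |Σ_j c_j e^{ijα}|²`
is non-negative. Hence `K ≥ 0`, and `f̄_N ≥ 0` follows from `f ≥ 0` and `w ≥ 0`.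
-/
open MeasureTheory

/-- The normalized Chebyshev polynomials of the first kind, as functions on `ℝ`:
`T̄_0 = T_0 / √π` and `T̄_k = √(2/π) · T_k` for `k ≥ 1`. -/
noncomputable def Tbar (k : ℕ) (x : ℝ) : ℝ :=
  if k = 0 then ((Polynomial.Chebyshev.T ℝ 0).eval x) / Real.sqrt Real.pi
  else Real.sqrt (2 / Real.pi) * ((Polynomial.Chebyshev.T ℝ (k : ℤ)).eval x)

/-- The Chebyshev weight function `w(x) = 1/√(1 - x²)`. -/
noncomputable def wCheb (x : ℝ) : ℝ := 1 / Real.sqrt (1 - x ^ 2)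

/-- The Jackson coefficients
`b̂_N[k] = Σ_{j = -N/2-1}^{N/2+1-k} (N/2+1-|j|)·(N/2+1-|j+k|)`. -/
noncomputable def bhat (N k : ℕ) : ℝ :=
  ∑ j ∈ Finset.Icc (-(N : ℤ) / 2 - 1) ((N : ℤ) / 2 + 1 - (k : ℤ)),
    ((((N : ℤ) / 2 + 1 - |j|) * ((N : ℤ) / 2 + 1 - |j + (k : ℤ)|) : ℤ) : ℝ)

/-- The Chebyshev coefficient `⟨f, w·T̄_k⟩ = ∫_{-1}^1 f(x)·w(x)·T̄_k(x) dx`. -/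
noncomputable def chebCoeff (f : ℝ → ℝ) (k : ℕ) : ℝ :=
  ∫ x in (-1 : ℝ)..1, f x * (wCheb x * Tbar k x)

/-- The Jackson damped Chebyshev approximation
`f̄_N(x) = Σ_{k=0}^N (b̂_N[k]/b̂_N[0]) · ⟨f, w·T̄_k⟩ · T̄_k(x)`. -/
noncomputable def jacksonApprox (N : ℕ) (f : ℝ → ℝ) (x : ℝ) : ℝ :=
  ∑ k ∈ Finset.range (N + 1), (bhat N k / bhat N 0) * chebCoeff f k * Tbar k x

open Finset Real

theorem Finset.sum_product_self_eq_of_swap {α M : Type*} [LinearOrder α] [AddCommMonoid M]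
    (s : Finset α) (G : α × α → M) (hG : ∀ p, G p.swap = G p) :
    ∑ p ∈ s ×ˢ s, G p =
      ∑ p ∈ s ×ˢ s with p.1 = p.2, G p + 2 • ∑ p ∈ s ×ˢ s with p.1 < p.2, G p := by
  have hswap : ∑ p ∈ s ×ˢ s with p.2 < p.1, G p = ∑ p ∈ s ×ˢ s with p.1 < p.2, G p :=
    sum_nbij' Prod.swap Prod.swap (by simp +contextual) (by simp +contextual)
      (by simp) (by simp) fun p _ => (hG p).symm
  rw [two_nsmul, ← add_assoc, ← sum_filter_add_sum_filter_not _ (fun p : α × α => p.1 = p.2),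
    ← sum_filter_add_sum_filter_not {p ∈ s ×ˢ s | ¬p.1 = p.2} (fun p : α × α => p.1 < p.2),
    add_assoc, filter_filter, filter_filter]
  congr 2
  · exact sum_congr (filter_congr fun p _ => ⟨fun h => h.2, fun h => ⟨h.ne, h⟩⟩) fun _ _ => rfl
  · rw [← hswap]
    exact sum_congr (filter_congr fun p _ =>
      ⟨fun h => (not_lt.1 h.2).lt_of_ne' h.1, fun h => ⟨h.ne', h.not_gt⟩⟩) fun _ _ => rfl

noncomputable def autocorrelation (s : Finset ℤ) (c : ℤ → ℝ) (k : ℕ) : ℝ :=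
  ∑ p ∈ s ×ˢ s with p.2 - p.1 = (k : ℤ), c p.1 * c p.2

section Autocorrelation

variable {s : Finset ℤ} (c : ℤ → ℝ)

theorem sum_mul_mul_cos_sub_nonneg (α : ℝ) :
    0 ≤ ∑ p ∈ s ×ˢ s, c p.1 * c p.2 * cos ((p.2 - p.1 : ℤ) * α) :=
  calc 0 ≤ (∑ j ∈ s, c j * cos (j * α)) ^ 2 + (∑ j ∈ s, c j * sin (j * α)) ^ 2 := by positivity
    _ = _ := by
      rw [sq, sq, sum_mul_sum, sum_mul_sum, ← sum_product', ← sum_product', ← sum_add_distrib]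
      refine sum_congr rfl fun p _ => ?_
      push_cast
      rw [sub_mul, cos_sub]
      ring

theorem sum_filter_lt_eq_sum_autocorrelation (F : ℤ → ℝ) {n : ℕ}
    (hn : ∀ p ∈ s, ∀ q ∈ s, q - p ≤ n) :
    ∑ p ∈ s ×ˢ s with p.1 < p.2, c p.1 * c p.2 * F (p.2 - p.1) =
      ∑ k ∈ Icc 1 n, autocorrelation s c k * F k := by
  have hmaps : ∀ p ∈ (s ×ˢ s).filter (fun p => p.1 < p.2), (p.2 - p.1).toNat ∈ Icc 1 n := by
    simp only [mem_filter, mem_product, mem_Icc]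
    intro p ⟨⟨hp, hq⟩, hlt⟩
    have hle := hn _ hp _ hq
    omega
  rw [← sum_fiberwise_of_maps_to hmaps]
  refine sum_congr rfl fun k hk => ?_
  rw [autocorrelation, sum_mul, filter_filter]
  refine sum_congr (filter_congr fun p _ => ?_) fun p hp => ?_
  · simp only [mem_Icc] at hk
    omega
  · rw [(mem_filter.1 hp).2]

theorem sum_product_eq_autocorrelation_of_even (F : ℤ → ℝ) (hF : ∀ d, F (-d) = F d) {n : ℕ}
    (hn : ∀ p ∈ s, ∀ q ∈ s, q - p ≤ n) :
    ∑ p ∈ s ×ˢ s, c p.1 * c p.2 * F (p.2 - p.1) =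
      autocorrelation s c 0 * F 0 + 2 * ∑ k ∈ Icc 1 n, autocorrelation s c k * F k := by
  rw [sum_product_self_eq_of_swap _ _ fun p => by
      rw [Prod.fst_swap, Prod.snd_swap, ← neg_sub, hF, mul_comm (c p.2)],
    sum_filter_lt_eq_sum_autocorrelation c F hn, nsmul_eq_mul, Nat.cast_ofNat, autocorrelation,
    sum_mul]
  congr 1
  exact sum_congr (filter_congr fun p _ => by omega) fun p hp => by
    rw [(mem_filter.1 hp).2, Nat.cast_zero]

theorem autocorrelation_add_two_mul_sum_cos_nonneg {n : ℕ} (hn : ∀ p ∈ s, ∀ q ∈ s, q - p ≤ n)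
    (α : ℝ) :
    0 ≤ autocorrelation s c 0 + 2 * ∑ k ∈ Icc 1 n, autocorrelation s c k * cos (k * α) := by
  have h := sum_product_eq_autocorrelation_of_even c (fun d => cos (d * α))
    (fun d => by rw [Int.cast_neg, neg_mul, cos_neg]) hn
  simp only [Int.cast_zero, zero_mul, cos_zero, mul_one, Int.cast_natCast] at h
  exact h ▸ sum_mul_mul_cos_sub_nonneg c α

end Autocorrelation

theorem add_two_mul_sum_cos_mul_cos_nonneg (a : ℕ → ℝ) (n : ℕ)
    (h : ∀ α : ℝ, 0 ≤ a 0 + 2 * ∑ k ∈ Icc 1 n, a k * cos (k * α)) (θ φ : ℝ) :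
    0 ≤ a 0 + 2 * ∑ k ∈ Icc 1 n, a k * (cos (k * θ) * cos (k * φ)) := by
  have hprod : ∀ k : ℕ, a k * (cos (k * θ) * cos (k * φ)) =
      (a k * cos (k * (θ - φ)) + a k * cos (k * (θ + φ))) / 2 := fun k => by
    rw [mul_sub, mul_add, cos_sub, cos_add]; ring
  have hsum := add_nonneg (h (θ - φ)) (h (θ + φ))
  simp only [hprod, ← sum_div, sum_add_distrib] at hsum ⊢
  linarith

/- The terms of `bhat` with `j = -m - 1` or `j + k = m + 1` vanish, so the tent can be cut down to
`[-m, m]`. For odd `N` this fails: `-(N : ℤ) / 2` rounds down, and the range of `bhat` then starts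
at a point of negative weight. -/
theorem bhat_two_mul_eq_autocorrelation (m k : ℕ) :
    bhat (2 * m) k =
      autocorrelation (Icc (-(m : ℤ)) m) (fun j => ((m + 1 - |j| : ℤ) : ℝ)) k := by
  have hm : ((2 * m : ℕ) : ℤ) / 2 = m := by omega
  have hne : ∀ j : ℤ, -(m : ℤ) - 1 ≤ j → j ≤ m + 1 → ((m + 1 - |j| : ℤ) : ℝ) ≠ 0 →
      -(m : ℤ) ≤ j ∧ j ≤ m := fun j hlo hhi hj => by
    rw [Int.cast_ne_zero] at hj
    rcases abs_cases j with ⟨h, _⟩ | ⟨h, _⟩ <;> omega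
  rw [bhat, autocorrelation, hm]
  refine sum_bij_ne_zero (fun j _ _ => (j, j + k)) (fun j hj hj0 => ?_) (fun _ _ _ _ _ _ h => ?_)
    (fun p hp hp0 => ⟨p.1, ?_⟩) fun j _ _ => by push_cast; rfl
  · rw [Int.cast_mul] at hj0
    simp only [mem_Icc] at hj
    have hj_mem := hne _ (by omega) (by omega) (left_ne_zero_of_mul hj0)
    have hjk_mem := hne _ (by omega) (by omega) (right_ne_zero_of_mul hj0)
    simp only [mem_Icc, mem_filter, mem_product]
    omega
  · exact (Prod.ext_iff.1 h).1
  · simp only [mem_Icc, mem_filter, mem_product] at hp ⊢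
    refine ⟨by omega, ?_, by ext <;> simp; omega⟩
    rwa [show p.1 + (k : ℤ) = p.2 by omega, Int.cast_mul]

theorem bhat_zero_nonneg (N : ℕ) : 0 ≤ bhat N 0 :=
  sum_nonneg fun _ _ => by
    simpa only [Nat.cast_zero, add_zero, Int.cast_mul] using mul_self_nonneg _

noncomputable def jacksonKernel (N : ℕ) (x y : ℝ) : ℝ :=
  ∑ k ∈ range (N + 1), bhat N k / bhat N 0 * Tbar k x * Tbar k y

theorem Tbar_zero (x : ℝ) : Tbar 0 x = 1 / √π := by
  simp [Tbar]

theorem Tbar_cos {k : ℕ} (hk : k ≠ 0) (θ : ℝ) : Tbar k (cos θ) = √(2 / π) * cos (k * θ) := by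
  simp [Tbar, hk, Polynomial.Chebyshev.T_real_cos]

theorem continuous_Tbar (k : ℕ) : Continuous (Tbar k) := by
  unfold Tbar
  split_ifs
  · exact (Polynomial.continuous _).div_const _
  · exact continuous_const.mul (Polynomial.continuous _)

theorem jacksonKernel_cos_cos (N : ℕ) (θ φ : ℝ) :
    jacksonKernel N (cos θ) (cos φ) =
      (bhat N 0 + 2 * ∑ k ∈ Icc 1 N, bhat N k * (cos (k * θ) * cos (k * φ))) / (π * bhat N 0) := by
  have hπ : √π ^ 2 = π := sq_sqrt pi_pos.le
  have h2π : √(2 / π) ^ 2 = 2 / π := sq_sqrt (by positivity)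
  rw [jacksonKernel, range_eq_Ico, sum_eq_sum_Ico_succ_bot (by omega : 0 < N + 1), zero_add,
    Ico_add_one_right_eq_Icc, Tbar_zero, Tbar_zero, mul_sum, add_div, sum_div]
  congr 1
  · field_simp
    rw [hπ]
  · refine sum_congr rfl fun k hk => ?_
    have hk0 : k ≠ 0 := by simp only [mem_Icc] at hk; omega
    rw [Tbar_cos hk0, Tbar_cos hk0]
    field_simp
    rw [h2π]
    field_simp

theorem jacksonKernel_nonneg (m : ℕ) {x y : ℝ} (hx : x ∈ Set.Icc (-1 : ℝ) 1)
    (hy : y ∈ Set.Icc (-1 : ℝ) 1) : 0 ≤ jacksonKernel (2 * m) x y := by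
  rw [← cos_arccos hx.1 hx.2, ← cos_arccos hy.1 hy.2, jacksonKernel_cos_cos]
  refine div_nonneg ?_ (mul_nonneg pi_pos.le (bhat_zero_nonneg _))
  have hdiff : ∀ p ∈ Icc (-(m : ℤ)) m, ∀ q ∈ Icc (-(m : ℤ)) m, q - p ≤ (2 * m : ℕ) := by
    simp only [mem_Icc]
    omega
  simp only [bhat_two_mul_eq_autocorrelation]
  exact add_two_mul_sum_cos_mul_cos_nonneg _ _
    (autocorrelation_add_two_mul_sum_cos_nonneg _ hdiff) _ _

theorem wCheb_nonneg (x : ℝ) : 0 ≤ wCheb x := by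
  unfold wCheb
  positivity

theorem intervalIntegrable_wCheb : IntervalIntegrable wCheb volume (-1) 1 := by
  refine intervalIntegral.intervalIntegrable_deriv_of_nonneg (g := arcsin)
    continuous_arcsin.continuousOn (fun x hx => ?_) fun x _ => wCheb_nonneg x
  norm_num at hx
  exact hasDerivAt_arcsin hx.1.ne' hx.2.ne

theorem jacksonApprox_eq_integral (N : ℕ) {f : ℝ → ℝ}
    (hf : ContinuousOn f (Set.Icc (-1 : ℝ) 1)) (x : ℝ) :
    jacksonApprox N f x = ∫ y in (-1 : ℝ)..1, f y * wCheb y * jacksonKernel N x y := by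
  have hfw : IntervalIntegrable (fun y => f y * wCheb y) volume (-1) 1 :=
    intervalIntegrable_wCheb.continuousOn_mul (by rwa [Set.uIcc_of_le (by norm_num)])
  simp only [jacksonKernel, mul_sum]
  rw [intervalIntegral.integral_finsetSum fun k _ =>
    hfw.mul_continuousOn (g := fun y => bhat N k / bhat N 0 * Tbar k x * Tbar k y)
      ((continuous_Tbar k).const_mul _).continuousOn]
  refine sum_congr rfl fun k _ => ?_
  rw [chebCoeff, ← intervalIntegral.integral_const_mul, ← intervalIntegral.integral_mul_const]
  congr 1
  ext y
  ring

theorem jacksonApprox_nonneg_general (N : ℕ) (hN4 : 4 ∣ N)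
    (f : ℝ → ℝ) (hcont : ContinuousOn f (Set.Icc (-1 : ℝ) 1))
    (hpos : ∀ x ∈ Set.Icc (-1 : ℝ) 1, 0 ≤ f x) :
    ∀ x ∈ Set.Icc (-1 : ℝ) 1, 0 ≤ jacksonApprox N f x := by
  obtain ⟨m, rfl⟩ : 2 ∣ N := (dvd_mul_right 2 2).trans hN4
  intro x hx
  rw [jacksonApprox_eq_integral _ hcont]
  exact intervalIntegral.integral_nonneg (by norm_num) fun y hy =>
    mul_nonneg (mul_nonneg (hpos y hy) (wCheb_nonneg y)) (jacksonKernel_nonneg m hx hy)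

/-- **The Jackson damped Chebyshev approximation preserves non-negativity.**
If `f : [-1,1] → ℝ` is continuous and non-negative and `N` is a positive multiple of `4`,
then `f̄_N ≥ 0` on `[-1,1]`. -/
theorem jacksonApprox_nonneg (N : ℕ) (hNpos : 0 < N) (hN4 : 4 ∣ N)
    (f : ℝ → ℝ) (hcont : ContinuousOn f (Set.Icc (-1 : ℝ) 1))
    (hpos : ∀ x ∈ Set.Icc (-1 : ℝ) 1, 0 ≤ f x) :
    ∀ x ∈ Set.Icc (-1 : ℝ) 1, 0 ≤ jacksonApprox N f x :=
  jacksonApprox_nonneg_general N hN4 f hcont hpos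
end

section
/- There exists an absolute constant C > 0 such that the following holds. Let A ∈ ℝ^{n×n} be a symmetric matrix with ‖A‖₂ ≤ 1, let N be a positive integer, let δ ∈ (0, 1/2], Δ > 0, and let ℓ be an integer with ℓ ≥ max(1, C·log²(N/δ)/(n·Δ²)). Let g^{(1)}, …, g^{(ℓ)} be independent random vectors drawn uniformly from {−1, 1}^n, and for each k = 1,…,N set τ̃_k = (√(2/π)/(ℓ·n))·Σ_{i=1}^{ℓ} (g^{(i)})ᵀ T_k(A) g^{(i)}. Then with probability at least 1 − δ, for every k = 1,…,N, |τ̃_k − (1/n)·tr(T̄_k(A))| ≤ Δ. -/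
open Matrix

/-- `T_k(A)`: the `k`-th Chebyshev polynomial of the first kind applied to a matrix `A`. -/
noncomputable def chebTMat {n : ℕ} (A : Matrix (Fin n) (Fin n) ℝ) (k : ℕ) :
    Matrix (Fin n) (Fin n) ℝ :=
  Polynomial.aeval A (Polynomial.Chebyshev.T ℝ (k : ℤ))

/-- The Euclidean norm of a vector in `ℝ^n`. -/
noncomputable def e2norm {n : ℕ} (v : Fin n → ℝ) : ℝ := Real.sqrt (∑ i, v i ^ 2)

/-- A `±1` (Rademacher) sign from a boolean. -/
def radSign (b : Bool) : ℝ := if b then 1 else -1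

/-
With `M = T_k(A)`, the unnormalised error `∑ᵢ gᵢᵀ M gᵢ - ℓ tr M` is the Rademacher chaos
`∑ᵢ gᵢᵀ (M - diag M) gᵢ`, and `‖M - diag M‖ ≤ 2` because `|T_k| ≤ 1` on `[-1, 1]`.
A chaos `xᵀ B x` with zero diagonal is decoupled by a uniformly random splitting `δ` of the
coordinates: `xᵀ B x = 4 𝔼_δ xᵀ B_δ x`, where `B_δ` keeps the rows in `δ` and the columns outside
it. Jensen's inequality moves the exponential inside `𝔼_δ`, and as `xᵀ B_δ x` reads `x` only on `δ`
on the left and only off `δ` on the right, it is distributed as `yᵀ B_δ x` with `y` an independent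
copy of `x`. Conditionally on `x` this is a Rademacher sum, sub-Gaussian with variance proxy
`‖B_δ x‖² ≤ ‖B‖² n`. The `ℓ` probe vectors are independent, so the error is sub-Gaussian with
variance proxy `64 n ℓ`; Chernoff's bound and a union bound over `k ≤ N` conclude.
-/

open Finset Real MeasureTheory ProbabilityTheory
open scoped BigOperators NNReal Matrix.Norms.L2Operator

lemma Real.exp_expect_le_expect_exp {α : Type*} [Fintype α] [Nonempty α] (f : α → ℝ) :
    exp (𝔼 a, f a) ≤ 𝔼 a, exp (f a) := by
  have hcard : (0 : ℝ) < Fintype.card α := by exact_mod_cast Fintype.card_pos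
  simpa [Fintype.expect_eq_sum_div_card, div_eq_inv_mul, mul_sum] using
    convexOn_exp.map_sum_le (t := univ) (w := fun _ => (Fintype.card α : ℝ)⁻¹) (p := f)
      (fun _ _ => by positivity) (by simp [hcard.ne']) fun _ _ => Set.mem_univ _

lemma Fintype.expect_prod_apply {ι : Type*} [Fintype ι] [DecidableEq ι] {β : ι → Type*}
    [∀ i, Fintype (β i)] [∀ i, Nonempty (β i)] (f : ∀ i, β i → ℝ) :
    𝔼 z : (∀ i, β i), ∏ i, f i (z i) = ∏ i, 𝔼 b, f i b := by
  simp only [Fintype.expect_eq_sum_div_card, prod_div_distrib, ← Fintype.prod_sum,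
    Fintype.card_pi, Nat.cast_prod]

@[simp] lemma radSign_not (b : Bool) : radSign (!b) = -radSign b := by
  cases b <;> simp [radSign]

lemma radSign_mul_self (b : Bool) : radSign b * radSign b = 1 := by
  cases b <;> simp [radSign]

lemma expect_exp_mul_radSign (x : ℝ) : 𝔼 b, exp (x * radSign b) = cosh x := by
  rw [Fintype.expect_eq_sum_div_card, cosh_eq]
  simp [radSign]

section RademacherVector

variable {ι : Type*} [Fintype ι]

def radVec (z : ι → Bool) : ι → ℝ := fun i => radSign (z i)

lemma norm_toLp_radVec_sq (z : ι → Bool) :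
    ‖WithLp.toLp 2 (radVec z)‖ ^ 2 = Fintype.card ι := by
  simp [EuclideanSpace.norm_sq_eq, radVec, radSign, apply_ite]

variable [DecidableEq ι]

lemma radVec_dotProduct_diagonal_mulVec (z : ι → Bool) (d : ι → ℝ) :
    radVec z ⬝ᵥ diagonal d *ᵥ radVec z = ∑ i, d i := by
  simp only [dotProduct, mulVec_diagonal, radVec]
  exact sum_congr rfl fun i _ => by rw [mul_left_comm, radSign_mul_self, mul_one]

lemma expect_eq_zero_of_update_not {f : (ι → Bool) → ℝ} (a : ι)
    (hf : ∀ z, f (Function.update z a (!z a)) = -f z) : 𝔼 z, f z = 0 := by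
  have hinv : Function.Involutive fun z : ι → Bool => Function.update z a (!z a) := by
    intro z; simp
  have h := Fintype.expect_equiv hinv.toPerm f (fun z => -f z) fun z => by simp [hf]
  rw [expect_neg_distrib] at h
  linarith

lemma expect_radSign_apply (a : ι) : 𝔼 z : ι → Bool, radSign (z a) = 0 :=
  expect_eq_zero_of_update_not a fun z => by simp

lemma expect_radSign_mul_radSign {a b : ι} (hab : a ≠ b) :
    𝔼 z : ι → Bool, radSign (z a) * radSign (z b) = 0 :=
  expect_eq_zero_of_update_not a fun z => by simp [Function.update_of_ne hab.symm]

lemma expect_ite_mul_ite_not {a b : ι} (hab : a ≠ b) :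
    𝔼 δ : ι → Bool, (if δ a then 1 else 0 : ℝ) * (if δ b then 0 else 1) = 1 / 4 := by
  have hsigns : ∀ δ : ι → Bool, (if δ a then 1 else 0 : ℝ) * (if δ b then 0 else 1)
      = (1 + radSign (δ a) - radSign (δ b) - radSign (δ a) * radSign (δ b)) / 4 := by
    intro δ; cases δ a <;> cases δ b <;> norm_num [radSign]
  simp_rw [hsigns, ← expect_div, expect_sub_distrib, expect_add_distrib, Fintype.expect_const,
    expect_radSign_apply, expect_radSign_mul_radSign hab]
  norm_num

lemma expect_exp_radVec_dotProduct_le (w : ι → ℝ) :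
    𝔼 z, exp (radVec z ⬝ᵥ w) ≤ exp (‖WithLp.toLp 2 w‖ ^ 2 / 2) := by
  calc 𝔼 z, exp (radVec z ⬝ᵥ w) = 𝔼 z : ι → Bool, ∏ i, exp (w i * radSign (z i)) := by
        simp only [dotProduct, exp_sum, radVec, mul_comm]
    _ = ∏ i, cosh (w i) := by
        rw [Fintype.expect_prod_apply fun i b => exp (w i * radSign b)]
        simp only [expect_exp_mul_radSign]
    _ ≤ ∏ i, exp (w i ^ 2 / 2) :=
        prod_le_prod (fun i _ => (cosh_pos _).le) fun i _ => cosh_le_exp_half_sq _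
    _ = exp (‖WithLp.toLp 2 w‖ ^ 2 / 2) := by
        rw [← exp_sum, EuclideanSpace.norm_sq_eq, sum_div]
        simp

end RademacherVector

section Decoupling

variable {ι : Type*} [Fintype ι] [DecidableEq ι]

def piecewiseBy {α : Type*} (δ : ι → Bool) (p q : ι → α) : ι → α :=
  fun i => if δ i then p i else q i

lemma expect_piecewiseBy {α : Type*} [Fintype α] [Nonempty α] (δ : ι → Bool)
    (g : (ι → α) → ℝ) : 𝔼 p, 𝔼 q, g (piecewiseBy δ p q) = 𝔼 z, g z := by
  have hinv : Function.Involutive fun pq : (ι → α) × (ι → α) =>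
      (piecewiseBy δ pq.1 pq.2, piecewiseBy δ pq.2 pq.1) := by
    rintro ⟨p, q⟩
    ext i <;> by_cases h : δ i <;> simp [piecewiseBy, h]
  calc 𝔼 p, 𝔼 q, g (piecewiseBy δ p q)
      = 𝔼 pq : (ι → α) × (ι → α), g (piecewiseBy δ pq.1 pq.2) := by
        rw [← univ_product_univ]
        exact (expect_product' _ _ fun p q => g (piecewiseBy δ p q)).symm
    _ = 𝔼 pq : (ι → α) × (ι → α), g pq.1 := Fintype.expect_equiv hinv.toPerm _ _ fun _ => rfl
    _ = 𝔼 z, g z := by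
        rw [← univ_product_univ, expect_product' _ _ fun p (_ : ι → α) => g p]
        simp

def decouplingBlock (δ : ι → Bool) (B : Matrix ι ι ℝ) : Matrix ι ι ℝ :=
  diagonal (fun i => if δ i then 1 else 0) * B * diagonal (fun i => if δ i then 0 else 1)

lemma decouplingBlock_apply (δ : ι → Bool) (B : Matrix ι ι ℝ) (a b : ι) :
    decouplingBlock δ B a b = (if δ a then 1 else 0) * B a b * (if δ b then 0 else 1) := by
  simp [decouplingBlock, diagonal_mul, mul_diagonal]

lemma norm_decouplingBlock_le (δ : ι → Bool) (B : Matrix ι ι ℝ) :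
    ‖decouplingBlock δ B‖ ≤ ‖B‖ := by
  have hmask : ∀ c d : ℝ, |c| ≤ 1 → |d| ≤ 1 →
      ‖(diagonal fun i => if δ i then c else d)‖ ≤ 1 := by
    intro c d hc hd
    rw [l2_opNorm_diagonal, pi_norm_le_iff_of_nonneg zero_le_one]
    intro i; split_ifs <;> simpa
  calc ‖decouplingBlock δ B‖ ≤ 1 * ‖B‖ * 1 := by
        refine (l2_opNorm_mul _ _).trans ?_
        gcongr
        · exact (l2_opNorm_mul _ _).trans (by gcongr; exact hmask 1 0 (by simp) (by simp))
        · exact hmask 0 1 (by simp) (by simp)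
    _ = ‖B‖ := by ring

lemma quadForm_decouplingBlock_piecewiseBy (δ : ι → Bool) (B : Matrix ι ι ℝ) (p q : ι → Bool) :
    radVec (piecewiseBy δ p q) ⬝ᵥ decouplingBlock δ B *ᵥ radVec (piecewiseBy δ p q)
      = radVec p ⬝ᵥ decouplingBlock δ B *ᵥ radVec q := by
  simp only [dotProduct, mulVec, decouplingBlock_apply, mul_sum]
  refine sum_congr rfl fun a _ => sum_congr rfl fun b _ => ?_
  by_cases ha : δ a <;> by_cases hb : δ b <;> simp [radVec, piecewiseBy, ha, hb]

lemma expect_quadForm_decouplingBlock (B : Matrix ι ι ℝ) (hB : ∀ i, B i i = 0) (x : ι → ℝ) :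
    𝔼 δ, x ⬝ᵥ decouplingBlock δ B *ᵥ x = (x ⬝ᵥ B *ᵥ x) / 4 := by
  simp only [dotProduct, mulVec, decouplingBlock_apply, mul_sum, sum_div]
  rw [expect_sum_comm]
  refine sum_congr rfl fun a _ => ?_
  rw [expect_sum_comm]
  refine sum_congr rfl fun b _ => ?_
  obtain rfl | hab := eq_or_ne a b
  · simp [hB]
  · calc 𝔼 δ : ι → Bool, x a * ((if δ a then 1 else 0) * B a b * (if δ b then 0 else 1) * x b)
        = (𝔼 δ : ι → Bool, (if δ a then 1 else 0 : ℝ) * (if δ b then 0 else 1))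
            * (x a * (B a b * x b)) := by
          rw [expect_mul]; congr 1; ext δ; ring
      _ = x a * (B a b * x b) / 4 := by rw [expect_ite_mul_ite_not hab]; ring

theorem expect_exp_mul_quadForm_le (B : Matrix ι ι ℝ) (hB : ∀ i, B i i = 0) (t : ℝ) :
    𝔼 z, exp (t * (radVec z ⬝ᵥ B *ᵥ radVec z))
      ≤ exp (8 * t ^ 2 * ‖B‖ ^ 2 * Fintype.card ι) := by
  have hjensen : ∀ z, exp (t * (radVec z ⬝ᵥ B *ᵥ radVec z))
      ≤ 𝔼 δ, exp (4 * t * (radVec z ⬝ᵥ decouplingBlock δ B *ᵥ radVec z)) := fun z =>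
    calc exp (t * (radVec z ⬝ᵥ B *ᵥ radVec z))
        = exp (𝔼 δ, 4 * t * (radVec z ⬝ᵥ decouplingBlock δ B *ᵥ radVec z)) := by
          rw [← mul_expect, expect_quadForm_decouplingBlock B hB]; ring_nf
      _ ≤ _ := exp_expect_le_expect_exp _
  have hconditional : ∀ δ q, 𝔼 p, exp (4 * t * (radVec p ⬝ᵥ decouplingBlock δ B *ᵥ radVec q))
      ≤ exp (8 * t ^ 2 * ‖B‖ ^ 2 * Fintype.card ι) := by
    intro δ q
    set v := decouplingBlock δ B *ᵥ radVec q
    have hv : ‖WithLp.toLp 2 v‖ ≤ ‖B‖ * ‖WithLp.toLp 2 (radVec q)‖ :=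
      (l2_opNorm_mulVec _ (WithLp.toLp 2 (radVec q))).trans
        (by gcongr; exact norm_decouplingBlock_le δ B)
    calc 𝔼 p, exp (4 * t * (radVec p ⬝ᵥ v)) = 𝔼 p, exp (radVec p ⬝ᵥ (4 * t) • v) := by
          simp only [dotProduct_smul, smul_eq_mul, mul_comm]
      _ ≤ exp (‖WithLp.toLp 2 ((4 * t) • v)‖ ^ 2 / 2) := expect_exp_radVec_dotProduct_le _
      _ ≤ exp ((4 * t) ^ 2 * (‖B‖ * ‖WithLp.toLp 2 (radVec q)‖) ^ 2 / 2) := by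
          rw [WithLp.toLp_smul, norm_smul, mul_pow, Real.norm_eq_abs, sq_abs]
          gcongr
      _ = exp (8 * t ^ 2 * ‖B‖ ^ 2 * Fintype.card ι) := by
          rw [mul_pow ‖B‖, norm_toLp_radVec_sq]; ring_nf
  calc 𝔼 z, exp (t * (radVec z ⬝ᵥ B *ᵥ radVec z))
      ≤ 𝔼 z, 𝔼 δ, exp (4 * t * (radVec z ⬝ᵥ decouplingBlock δ B *ᵥ radVec z)) :=
        expect_le_expect fun z _ => hjensen z
    _ = 𝔼 δ, 𝔼 q, 𝔼 p, exp (4 * t * (radVec p ⬝ᵥ decouplingBlock δ B *ᵥ radVec q)) := by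
        rw [expect_comm]
        refine expect_congr rfl fun δ _ => ?_
        rw [← expect_piecewiseBy δ, expect_comm]
        simp only [quadForm_decouplingBlock_piecewiseBy]
    _ ≤ 𝔼 _δ : ι → Bool, 𝔼 _q : ι → Bool, exp (8 * t ^ 2 * ‖B‖ ^ 2 * Fintype.card ι) :=
        expect_le_expect fun δ _ => expect_le_expect fun q _ => hconditional δ q
    _ = exp (8 * t ^ 2 * ‖B‖ ^ 2 * Fintype.card ι) := by simp

end Decoupling

section OperatorNorm

variable {ι : Type*} [Fintype ι] [DecidableEq ι]

lemma Matrix.IsHermitian.abs_eigenvalues_le_norm {A : Matrix ι ι ℝ} (hA : A.IsHermitian)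
    (i : ι) : |hA.eigenvalues i| ≤ ‖A‖ := by
  have : Nonempty ι := ⟨i⟩
  simpa using spectrum.subset_closedBall_norm A (hA.eigenvalues_mem_spectrum_real i)

lemma Matrix.IsHermitian.norm_aeval_le {A : Matrix ι ι ℝ} (hA : A.IsHermitian)
    (p : Polynomial ℝ) {c : ℝ} (hc : 0 ≤ c) (hp : ∀ x, |x| ≤ ‖A‖ → |p.eval x| ≤ c) :
    ‖Polynomial.aeval A p‖ ≤ c := by
  rw [← cfc_polynomial p A hA.isSelfAdjoint, hA.cfc_eq, IsHermitian.cfc,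
    Unitary.conjStarAlgAut_apply, ← Unitary.coe_star, CStarRing.norm_mul_coe_unitary,
    CStarRing.norm_coe_unitary_mul, l2_opNorm_diagonal, pi_norm_le_iff_of_nonneg hc]
  exact fun i => hp _ (hA.abs_eigenvalues_le_norm i)

lemma Matrix.l2_opNorm_le_of_forall {A : Matrix ι ι ℝ} {c : ℝ} (hc : 0 ≤ c)
    (h : ∀ v, ‖WithLp.toLp 2 (A *ᵥ v)‖ ≤ c * ‖WithLp.toLp 2 v‖) : ‖A‖ ≤ c := by
  rw [cstar_norm_def]
  refine ContinuousLinearMap.opNorm_le_bound _ hc fun x => ?_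
  simpa only [← toEuclideanCLM_toLp, WithLp.toLp_ofLp] using h x.ofLp

lemma Matrix.abs_apply_le_l2_opNorm (A : Matrix ι ι ℝ) (i j : ι) : |A i j| ≤ ‖A‖ := by
  set e : ι → ℝ := Pi.single j 1
  calc |A i j| = |(A *ᵥ e) i| := by rw [mulVec_single_one, col_apply]
    _ ≤ ‖WithLp.toLp 2 (A *ᵥ e)‖ := by
        simpa using PiLp.norm_apply_le (WithLp.toLp 2 (A *ᵥ e)) i
    _ ≤ ‖A‖ * ‖WithLp.toLp 2 e‖ := l2_opNorm_mulVec A (WithLp.toLp 2 e)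
    _ = ‖A‖ := by simp [e]

lemma Matrix.l2_opNorm_sub_diagonal_diag_le (A : Matrix ι ι ℝ) :
    ‖A - diagonal A.diag‖ ≤ 2 * ‖A‖ := by
  have hdiag : ‖(diagonal A.diag : Matrix ι ι ℝ)‖ ≤ ‖A‖ := by
    rw [l2_opNorm_diagonal, pi_norm_le_iff_of_nonneg (norm_nonneg _)]
    exact fun i => by simpa using A.abs_apply_le_l2_opNorm i i
  linarith [norm_sub_le A (diagonal A.diag)]

end OperatorNorm

lemma e2norm_eq_norm_toLp {n : ℕ} (v : Fin n → ℝ) : e2norm v = ‖WithLp.toLp 2 v‖ := by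
  simp [e2norm, EuclideanSpace.norm_eq]

lemma norm_chebTMat_le_one {n : ℕ} {A : Matrix (Fin n) (Fin n) ℝ} (hA : A.IsSymm)
    (hA1 : ‖A‖ ≤ 1) (k : ℕ) : ‖chebTMat A k‖ ≤ 1 :=
  (isHermitian_iff_isSymm.mpr hA).norm_aeval_le _ zero_le_one fun _ hx =>
    Polynomial.Chebyshev.abs_eval_T_real_le_one _ (hx.trans hA1)

lemma hasSubgaussianMGF_uniformOfFintype {α : Type*} [Fintype α] [Nonempty α]
    [MeasurableSpace α] [MeasurableSingletonClass α] {X : α → ℝ} {c : ℝ≥0}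
    (h : ∀ t, 𝔼 a, exp (t * X a) ≤ exp (c * t ^ 2 / 2)) :
    HasSubgaussianMGF X c (PMF.uniformOfFintype α).toMeasure where
  integrable_exp_mul _ := .of_finite
  mgf_le t := by
    simpa [mgf, PMF.integral_eq_sum, Fintype.expect_eq_sum_div_card, div_eq_inv_mul, mul_sum]
      using h t

lemma ProbabilityTheory.HasSubgaussianMGF.measureReal_abs_ge_le {Ω : Type*} [MeasurableSpace Ω]
    {μ : Measure Ω} [IsFiniteMeasure μ] {X : Ω → ℝ} {c : ℝ≥0} (h : HasSubgaussianMGF X c μ)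
    {ε : ℝ} (hε : 0 ≤ ε) : μ.real {ω | ε ≤ |X ω|} ≤ 2 * exp (-ε ^ 2 / (2 * c)) := by
  have hsplit : {ω | ε ≤ |X ω|} = {ω | ε ≤ X ω} ∪ {ω | ε ≤ (-X) ω} := by
    ext ω; simp [le_abs]
  rw [hsplit]
  linarith [measureReal_union_le (μ := μ) {ω | ε ≤ X ω} {ω | ε ≤ (-X) ω}, h.measure_ge_le hε,
    h.neg.measure_ge_le hε]

lemma ofReal_one_sub_le_measure_of_sum_le {α κ : Type*} [MeasurableSpace α] {μ : Measure α}
    [IsProbabilityMeasure μ] (s : Finset κ) (bad : κ → Set α) {good : Set α}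
    (hgood : ∀ x, (∀ k ∈ s, x ∉ bad k) → x ∈ good) {ε : ℝ}
    (hε : ∑ k ∈ s, μ.real (bad k) ≤ ε) : ENNReal.ofReal (1 - ε) ≤ μ good := by
  have hcover : Set.univ ⊆ (⋃ k ∈ s, bad k) ∪ good := fun x _ => by
    by_cases hx : ∃ k ∈ s, x ∈ bad k
    · obtain ⟨k, hk, hxk⟩ := hx
      exact Or.inl (Set.mem_biUnion hk hxk)
    · exact Or.inr (hgood x fun k hk hxk => hx ⟨k, hk, hxk⟩)
  have hone : 1 ≤ μ.real (⋃ k ∈ s, bad k) + μ.real good := by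
    rw [← probReal_univ (μ := μ)]
    exact (measureReal_mono hcover).trans (measureReal_union_le _ _)
  rw [← ofReal_measureReal]
  exact ENNReal.ofReal_le_ofReal (by linarith [measureReal_biUnion_finset_le (μ := μ) s bad])

section Hutchinson

variable {ι κ : Type*} [Fintype ι] [Fintype κ]

/-- For `A = T_k(A₀)` and `κ = Fin ℓ`, `√(2/π) / (ℓ n)` times this is the error of `τ̃_k`. -/
def hutchinsonError (A : Matrix ι ι ℝ) (g : κ → ι → Bool) : ℝ :=
  ∑ i, radVec (g i) ⬝ᵥ A *ᵥ radVec (g i) - Fintype.card κ * A.trace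

variable [DecidableEq ι]

lemma hutchinsonError_eq_sum (A : Matrix ι ι ℝ) (g : κ → ι → Bool) :
    hutchinsonError A g = ∑ i, radVec (g i) ⬝ᵥ (A - diagonal A.diag) *ᵥ radVec (g i) := by
  simp only [sub_mulVec, dotProduct_sub, radVec_dotProduct_diagonal_mulVec, sum_sub_distrib,
    sum_const, card_univ, nsmul_eq_mul, hutchinsonError, trace]

variable [DecidableEq κ]

theorem expect_exp_mul_hutchinsonError_le (A : Matrix ι ι ℝ) (t : ℝ) :
    𝔼 g : κ → ι → Bool, exp (t * hutchinsonError A g)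
      ≤ exp (32 * t ^ 2 * ‖A‖ ^ 2 * Fintype.card ι * Fintype.card κ) := by
  have hdiag : ∀ i, (A - diagonal A.diag) i i = 0 := fun i => by simp
  calc 𝔼 g : κ → ι → Bool, exp (t * hutchinsonError A g)
      = ∏ _i : κ, 𝔼 z, exp (t * (radVec z ⬝ᵥ (A - diagonal A.diag) *ᵥ radVec z)) := by
        simp only [hutchinsonError_eq_sum, mul_sum, exp_sum]
        exact Fintype.expect_prod_apply fun _ z =>
          exp (t * (radVec z ⬝ᵥ (A - diagonal A.diag) *ᵥ radVec z))
    _ ≤ ∏ _i : κ, exp (32 * t ^ 2 * ‖A‖ ^ 2 * Fintype.card ι) := by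
        refine prod_le_prod (fun _ _ => expect_nonneg fun _ _ => (exp_pos _).le) fun _ _ => ?_
        refine (expect_exp_mul_quadForm_le _ hdiag t).trans (exp_le_exp.mpr ?_)
        calc 8 * t ^ 2 * ‖A - diagonal A.diag‖ ^ 2 * Fintype.card ι
            ≤ 8 * t ^ 2 * (2 * ‖A‖) ^ 2 * Fintype.card ι := by
              gcongr; exact A.l2_opNorm_sub_diagonal_diag_le
          _ = 32 * t ^ 2 * ‖A‖ ^ 2 * Fintype.card ι := by ring
    _ = exp (32 * t ^ 2 * ‖A‖ ^ 2 * Fintype.card ι * Fintype.card κ) := by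
        rw [prod_const, card_univ, ← exp_nat_mul]; ring_nf

theorem hasSubgaussianMGF_hutchinsonError (A : Matrix ι ι ℝ) (hA : ‖A‖ ≤ 1) :
    HasSubgaussianMGF (hutchinsonError (κ := κ) A) (64 * Fintype.card ι * Fintype.card κ)
      (PMF.uniformOfFintype (κ → ι → Bool)).toMeasure :=
  hasSubgaussianMGF_uniformOfFintype fun t => (expect_exp_mul_hutchinsonError_le A t).trans <| by
    gcongr
    push_cast
    calc 32 * t ^ 2 * ‖A‖ ^ 2 * Fintype.card ι * Fintype.card κ
        ≤ 32 * t ^ 2 * 1 ^ 2 * Fintype.card ι * Fintype.card κ := by gcongr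
      _ = 64 * Fintype.card ι * Fintype.card κ * t ^ 2 / 2 := by ring

theorem measureReal_abs_hutchinsonError_ge_le {A : Matrix ι ι ℝ} (hA : ‖A‖ ≤ 1) {ε : ℝ}
    (hε : 0 ≤ ε) :
    (PMF.uniformOfFintype (κ → ι → Bool)).toMeasure.real {g | ε ≤ |hutchinsonError A g|}
      ≤ 2 * exp (-(ε ^ 2 / (128 * Fintype.card ι * Fintype.card κ))) := by
  have h := (hasSubgaussianMGF_hutchinsonError (κ := κ) A hA).measureReal_abs_ge_le hε
  push_cast at h
  convert h using 3
  ring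

end Hutchinson

lemma two_mul_exp_neg_le_div {N δ x : ℝ} (hN : 1 ≤ N) (hδ : δ ∈ Set.Ioc 0 (1 / 2))
    (hx : 2 * π * log (N / δ) ^ 2 ≤ x) : 2 * exp (-x) ≤ δ / N := by
  obtain ⟨hδ0, hδ1⟩ := hδ
  set L := log (N / δ)
  have hL : log 2 ≤ L := log_le_log two_pos (by rw [le_div_iff₀ hδ0]; linarith)
  have hπL : 1 ≤ π * L := by nlinarith [pi_gt_three, log_two_gt_d9]
  have h2L : 2 * L ≤ 2 * π * L ^ 2 := by
    nlinarith [mul_le_mul_of_nonneg_left hπL (by linarith [log_two_gt_d9] : 0 ≤ L)]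
  calc 2 * exp (-x) ≤ 2 * exp (-(L + log 2)) := by gcongr; linarith
    _ = δ / N := by
        rw [neg_add, exp_add, Real.exp_neg, Real.exp_neg, exp_log two_pos,
          exp_log (by positivity)]
        field_simp

lemma two_mul_exp_neg_sq_le_div {n ℓ N δ Δ : ℝ} (hn : 0 < n) (hℓ : 0 < ℓ) (hN : 1 ≤ N)
    (hδ : δ ∈ Set.Ioc 0 (1 / 2)) (hΔ : 0 < Δ) (hsize : 512 * log (N / δ) ^ 2 / (n * Δ ^ 2) ≤ ℓ) :
    2 * exp (-((Δ * ℓ * n / √(2 / π)) ^ 2 / (128 * n * ℓ))) ≤ δ / N := by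
  refine two_mul_exp_neg_le_div hN hδ ?_
  rw [div_le_iff₀ (by positivity)] at hsize
  have hexponent : (Δ * ℓ * n / √(2 / π)) ^ 2 / (128 * n * ℓ) = π * (n * Δ ^ 2 * ℓ) / 256 := by
    rw [div_pow, sq_sqrt (by positivity)]
    field_simp
    ring
  rw [hexponent]
  nlinarith [pi_pos]

lemma abs_div_mul_sub_div_mul_le {r ℓ n S T Δ : ℝ} (hr : 0 < r) (hℓ : 0 < ℓ) (hn : 0 < n)
    (h : |S - ℓ * T| ≤ Δ * ℓ * n / r) : |r / (ℓ * n) * S - r / n * T| ≤ Δ := by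
  have hscale : r / (ℓ * n) * S - r / n * T = r / (ℓ * n) * (S - ℓ * T) := by
    field_simp
  rw [hscale, abs_mul, abs_of_pos (by positivity), ← le_div_iff₀' (by positivity)]
  calc |S - ℓ * T| ≤ Δ * ℓ * n / r := h
    _ = Δ / (r / (ℓ * n)) := by field_simp

/-- **Guarantee for the Hutchinson Chebyshev moment estimator.**  There is an
absolute constant `C > 0` such that for any symmetric `A ∈ ℝ^{n×n}` with `‖A‖₂ ≤ 1`,
any `N ≥ 1`, `δ ∈ (0,1/2]`, `Δ > 0`, and any integer
`ℓ ≥ max(1, C·log²(N/δ)/(n·Δ²))`, if `g^{(1)},…,g^{(ℓ)}` are i.i.d. uniform in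
`{-1,1}^n` and `τ̃_k = (√(2/π)/(ℓn))·Σ_i (g^{(i)})ᵀ T_k(A) g^{(i)}`, then with
probability at least `1 - δ` we have `|τ̃_k - (1/n)·tr(T̄_k(A))| ≤ Δ` for all
`k = 1,…,N` (here `(1/n)·tr(T̄_k(A)) = (√(2/π)/n)·tr(T_k(A))` for `k ≥ 1`). -/
theorem hutchinson_cheb_moments_guarantee :
    ∃ C : ℝ, 0 < C ∧
      ∀ (n N : ℕ), 0 < n → 0 < N →
        ∀ A : Matrix (Fin n) (Fin n) ℝ, A.IsSymm →
          (∀ v : Fin n → ℝ, e2norm (A.mulVec v) ≤ e2norm v) →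
          ∀ δ Δ : ℝ, δ ∈ Set.Ioc (0 : ℝ) (1 / 2) → 0 < Δ →
            ∀ ℓ : ℕ,
              max 1 (C * Real.log ((N : ℝ) / δ) ^ 2 / ((n : ℝ) * Δ ^ 2)) ≤ (ℓ : ℝ) →
              ENNReal.ofReal (1 - δ) ≤
                (PMF.uniformOfFintype (Fin ℓ → Fin n → Bool)).toMeasure
                  {gs : Fin ℓ → Fin n → Bool |
                    ∀ k, 1 ≤ k → k ≤ N →
                      |(Real.sqrt (2 / Real.pi) / ((ℓ : ℝ) * (n : ℝ))) *
                          ∑ i, (fun j => radSign (gs i j)) ⬝ᵥ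
                            (chebTMat A k).mulVec (fun j => radSign (gs i j)) -
                        (Real.sqrt (2 / Real.pi) / (n : ℝ)) *
                          Matrix.trace (chebTMat A k)| ≤ Δ} := by
  refine ⟨512, by norm_num, fun n N hn hN A hA hAnorm δ Δ hδ hΔ ℓ hℓ => ?_⟩
  have hℓ0 : (0 : ℝ) < ℓ := one_pos.trans_le ((le_max_left _ _).trans hℓ)
  have hA1 : ‖A‖ ≤ 1 := l2_opNorm_le_of_forall zero_le_one fun v => by
    simpa [e2norm_eq_norm_toLp] using hAnorm v
  set t := Δ * ℓ * n / √(2 / π)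
  have htail : ∀ k, (PMF.uniformOfFintype (Fin ℓ → Fin n → Bool)).toMeasure.real
      {g | t ≤ |hutchinsonError (chebTMat A k) g|} ≤ δ / N := fun k => by
    have h := measureReal_abs_hutchinsonError_ge_le (κ := Fin ℓ) (norm_chebTMat_le_one hA hA1 k)
      (by positivity : 0 ≤ t)
    simp only [Fintype.card_fin] at h
    exact h.trans (two_mul_exp_neg_sq_le_div (by exact_mod_cast hn) hℓ0 (by exact_mod_cast hN) hδ
      hΔ ((le_max_right _ _).trans hℓ))
  refine ofReal_one_sub_le_measure_of_sum_le (Icc 1 N)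
    (fun k => {g | t ≤ |hutchinsonError (chebTMat A k) g|}) (fun g hg k hk1 hkN => ?_) ?_
  · have hk : ¬t ≤ |hutchinsonError (chebTMat A k) g| := hg k (mem_Icc.mpr ⟨hk1, hkN⟩)
    simp only [hutchinsonError, Fintype.card_fin, not_le] at hk
    exact abs_div_mul_sub_div_mul_le (by positivity) hℓ0 (by positivity) hk.le
  · calc ∑ k ∈ Icc 1 N, _ ≤ ∑ _k ∈ Icc 1 N, δ / N := sum_le_sum fun k _ => htail k
      _ = δ := by
        rw [sum_const, Nat.card_Icc, add_tsub_cancel_right, nsmul_eq_mul]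
        field_simp
end
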